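/- arXiv:2502.05031 — 6 statements merged into one kernel-verified Lean document; each statement's English description precedes it below -/
import Mathlib

section
/- Let M be a real symmetric n×n matrix with M² = M, and suppose indices i, j, k are such that M_{ij} = 0, M_{ik} ≠ 0, M_{kj} ≠ 0, and for all l ∉ {i,j,k}, M_{il} = 0 or M_{lj} = 0. Then we obtain a contradiction; i.e., no such matrix exists. (Equivalently: if a graph G has a pair of non-adjacent vertices with a unique common neighbor, then no matrix in S(G) is an idempotent projection, hence q(G) ≠ 2.) -/
theorem no_idempotent_with_unique_common_neighbor {n : ℕ}
    (M : Matrix (Fin n) (Fin n) ℝ) (hsymm : M.IsSymm) (hidem : M * M = M)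
    (i j k : Fin n) (hij : M i j = 0) (hik : M i k ≠ 0) (hkj : M k j ≠ 0)
    (huniq : ∀ l : Fin n, l ≠ i → l ≠ j → l ≠ k → M i l = 0 ∨ M l j = 0) :
    False := by
  have h : (M * M) i j = M i j := congrFun (congrFun hidem i) j
  rw [Matrix.mul_apply, hij] at h
  have hsum : ∑ l, M i l * M l j = M i k * M k j := by
    apply Finset.sum_eq_single
    · intro l _ hlk
      rcases eq_or_ne l i with rfl | hli
      · rw [hij, mul_zero]
      rcases eq_or_ne l j with rfl | hlj
      · rw [hij, zero_mul]
      rcases huniq l hli hlj hlk with h0 | h0 <;> simp [h0]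
    · intro hk
      exact absurd (Finset.mem_univ k) hk
  rw [hsum] at h
  exact mul_ne_zero hik hkj h
end

section
/- Let M be a real symmetric idempotent matrix (M² = M) and suppose i ≠ j satisfy M_{ij} ≠ 0 and there is no index l ∉ {i,j} with M_{il} ≠ 0 and M_{lj} ≠ 0 (i.e., vertices i and j are adjacent with no common neighbors in the graph of M). Then M_{ii} + M_{jj} = 1. -/
theorem diag_sum_eq_one_of_adjacent_no_common_neighbor {n : ℕ}
    (M : Matrix (Fin n) (Fin n) ℝ) (hsymm : M.IsSymm) (hidem : M * M = M)
    (i j : Fin n) (hij : i ≠ j) (hMij : M i j ≠ 0)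
    (hno : ¬ ∃ l : Fin n, l ≠ i ∧ l ≠ j ∧ M i l ≠ 0 ∧ M l j ≠ 0) :
    M i i + M j j = 1 := by
  have h := congrFun (congrFun hidem i) j
  rw [Matrix.mul_apply] at h
  have hsub : ∑ l, M i l * M l j = ∑ l ∈ ({i, j} : Finset (Fin n)), M i l * M l j := by
    symm
    apply Finset.sum_subset (Finset.subset_univ _)
    intro l _ hl
    simp only [Finset.mem_insert, Finset.mem_singleton, not_or] at hl
    by_contra hne
    exact hno ⟨l, hl.1, hl.2, fun h1 => hne (by rw [h1, zero_mul]),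
      fun h2 => hne (by rw [h2, mul_zero])⟩
  rw [hsub, Finset.sum_pair hij] at h
  have : (M i i + M j j) * M i j = M i j := by ring_nf; linarith [h]
  have := mul_right_cancel₀ hMij (this.trans (one_mul (M i j)).symm)
  linarith [this]
end

section
/- Let G be a strongly regular graph with parameters (n, k, 0, 2), let M ∈ S(G) satisfy M² = M, and let (v_i, v_j, v_k, v_l, v_i) be a 4-cycle in G. Then M_{jk}² = M_{il}² and M_{ij}² = M_{kl}², and moreover M_{ij}·M_{jk}·M_{kl}·M_{li} < 0 (the product of the four edge entries around the 4-cycle is negative). -/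
/-- `M` has the off-diagonal zero pattern of `G`, i.e. `M ∈ S(G)` up to symmetry. -/
def matchesGraph {V : Type*} (G : SimpleGraph V) (M : Matrix V V ℝ) : Prop :=
  ∀ i j : V, i ≠ j → (M i j = 0 ↔ ¬ G.Adj i j)

theorem sign_lemma_four_cycle {V : Type*} [Fintype V] [DecidableEq V]
    (G : SimpleGraph V) [DecidableRel G.Adj] (n k : ℕ)
    (hsrg : G.IsSRGWith n k 0 2)
    (M : Matrix V V ℝ) (hM : matchesGraph G M) (hsymm : M.IsSymm)
    (hidem : M * M = M)
    (i j k' l : V)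
    (hij : G.Adj i j) (hjk : G.Adj j k') (hkl : G.Adj k' l) (hli : G.Adj l i)
    (hik : i ≠ k') (hjl : j ≠ l) :
    (M j k') ^ 2 = (M i l) ^ 2 ∧ (M i j) ^ 2 = (M k' l) ^ 2 ∧
      M i j * M j k' * M k' l * M l i < 0 := by
  have hs : ∀ a b : V, M a b = M b a := fun a b => hsymm.apply b a
  have key : ∀ a b c d : V, G.Adj a b → G.Adj b c → G.Adj c d → G.Adj d a →
      a ≠ c → b ≠ d → M a b * M b c + M a d * M d c = 0 := by
    intro a b c d hab hbc hcd hda hac hbd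
    have hnac : ¬ G.Adj a c := by
      intro h
      exact (Fintype.card_eq_zero_iff.mp (hsrg.of_adj a c h)).elim ⟨b, hab, hbc.symm⟩
    have hMac : M a c = 0 := (hM a c hac).mpr hnac
    have hcard : Fintype.card (G.commonNeighbors a c) = 2 := hsrg.of_not_adj hac hnac
    have hsum : ∑ m, M a m * M m c = 0 := by
      have h := congrFun (congrFun hidem a) c
      rw [Matrix.mul_apply] at h
      rw [h, hMac]
    have hvanish : ∀ m ∈ (Finset.univ : Finset V), m ∉ ({b, d} : Finset V) →
        M a m * M m c = 0 := by
      intro m _ hm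
      simp only [Finset.mem_insert, Finset.mem_singleton, not_or] at hm
      obtain ⟨hmb, hmd⟩ := hm
      by_cases hma : m = a
      · rw [hma, hMac, mul_zero]
      by_cases hmc : m = c
      · rw [hmc, hMac, zero_mul]
      by_contra hne
      have h1 : M a m ≠ 0 := fun h => hne (by rw [h, zero_mul])
      have h2 : M m c ≠ 0 := fun h => hne (by rw [h, mul_zero])
      have ham : G.Adj a m := by
        by_contra h; exact h1 ((hM a m (Ne.symm hma)).mpr h)
      have hmc' : G.Adj m c := by
        by_contra h; exact h2 ((hM m c hmc).mpr h)
      have hsub : ({b, d, m} : Finset V) ⊆ (G.commonNeighbors a c).toFinset := by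
        intro x hx
        simp only [Finset.mem_insert, Finset.mem_singleton] at hx
        rw [Set.mem_toFinset, SimpleGraph.mem_commonNeighbors]
        rcases hx with rfl | rfl | rfl
        · exact ⟨hab, hbc.symm⟩
        · exact ⟨hda.symm, hcd⟩
        · exact ⟨ham, hmc'.symm⟩
      have h3 : ({b, d, m} : Finset V).card = 3 := by
        rw [Finset.card_insert_of_notMem (by simp [hbd, Ne.symm hmb]),
          Finset.card_insert_of_notMem (by simp [Ne.symm hmd]), Finset.card_singleton]
      have hle := Finset.card_le_card hsub
      rw [h3, Set.toFinset_card, hcard] at hle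
      omega
    have := Finset.sum_subset (Finset.subset_univ ({b, d} : Finset V)) hvanish
    rw [← this, Finset.sum_pair hbd] at hsum
    exact hsum
  have e1 := key i j k' l hij hjk hkl hli hik hjl
  have e2 := key j k' l i hjk hkl hli hij hjl (Ne.symm hik)
  rw [hs l k'] at e1
  rw [hs j i] at e2
  have haij : M i j ≠ 0 := fun h => (hM i j hij.ne).mp h hij
  have hbjk : M j k' ≠ 0 := fun h => (hM j k' hjk.ne).mp h hjk
  have hckl : M k' l ≠ 0 := fun h => (hM k' l hkl.ne).mp h hkl
  have hdil : M i l ≠ 0 := fun h => (hM i l (Ne.symm hli.ne)).mp h hli.symm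
  rw [hs l i]
  set a := M i j
  set b := M j k'
  set c := M k' l
  set d := M i l
  -- e1 : a * b + d * c = 0, e2 : b * c + a * d = 0
  have hac2 : a ^ 2 = c ^ 2 := by
    have h := mul_right_cancel₀ (mul_ne_zero hbjk hdil)
      (show a ^ 2 * (b * d) = c ^ 2 * (b * d) by linear_combination (a*d)*e1 - (d*c)*e2)
    exact h
  have hbd2 : b ^ 2 = d ^ 2 := by
    have h := mul_left_cancel₀ (pow_ne_zero 2 haij)
      (show a ^ 2 * b ^ 2 = a ^ 2 * d ^ 2 by linear_combination (a*b - d*c)*e1 - d^2*hac2)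
    exact h
  refine ⟨hbd2, hac2, ?_⟩
  have hprod : a * b * c * d = -((c * d) ^ 2) := by linear_combination (c*d)*e1
  have hpos : 0 < (c * d) ^ 2 :=
    (sq_nonneg _).lt_of_ne (Ne.symm (pow_ne_zero 2 (mul_ne_zero hckl hdil)))
  rw [hprod]
  linarith
end

section
/- The Clebsch graph satisfies q = 2: there exists a real symmetric 16×16 matrix M whose off-diagonal zero pattern matches the adjacency matrix of the Clebsch graph and which has exactly two distinct eigenvalues. Explicitly, one can take M with all diagonal entries 1/2, each nonzero off-diagonal entry ±1/(2√5), and M² = M, so the eigenvalues are 0 and 1 each with multiplicity 8. -/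
/-- `q(G)`: the minimum number of distinct eigenvalues over symmetric matrices in `S(G)`. -/
noncomputable def minDistinctEigs {V : Type*} [Fintype V] [DecidableEq V]
    (G : SimpleGraph V) : ℕ :=
  sInf {m | ∃ M : Matrix V V ℝ, M.IsSymm ∧ matchesGraph G M ∧ (spectrum ℝ M).ncard = m}

/-- The Clebsch graph: vertices are 4-bit strings, adjacent iff they differ
in exactly one bit or in all four bits. -/
def clebsch : SimpleGraph (Fin 4 → Bool) :=
  SimpleGraph.fromRel (fun u v =>
    (Finset.univ.filter fun i => u i ≠ v i).card = 1 ∨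
    (Finset.univ.filter fun i => u i ≠ v i).card = 4)

/-!
A real symmetric matrix whose spectrum is a single point `c` is `c • 1`, so a graph with an edge
has `q ≥ 2`. For the Clebsch graph, a signing `S` of the adjacency matrix with `S² = 5 • 1` makes
`P = (1 + S / √5) / 2` an idempotent with the graph's off-diagonal pattern; being neither `0` nor
`1`, it has spectrum `{0, 1}`.
-/

open Finset Matrix

lemma IsIdempotentElem.spectrum_eq_zero_one {𝕜 A : Type*} [Field 𝕜] [Ring A] [Algebra 𝕜 A]
    {p : A} (hp : IsIdempotentElem p) (h0 : p ≠ 0) (h1 : p ≠ 1) : spectrum 𝕜 p = {0, 1} := by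
  refine (hp.spectrum_subset 𝕜).antisymm ?_
  rintro _ (rfl | rfl)
  · rw [spectrum.zero_mem_iff]
    exact fun hu => h1 ((IsIdempotentElem.iff_eq_one_of_isUnit hu).mp hp)
  · rw [spectrum.mem_iff, map_one]
    exact fun hu => h0 (sub_eq_self.mp ((IsIdempotentElem.iff_eq_one_of_isUnit hu).mp hp.one_sub))

lemma IsIdempotentElem.half_smul_one_add {A : Type*} [Ring A] [Algebra ℝ A] {s : A}
    (hs : s * s = 1) : IsIdempotentElem ((2 : ℝ)⁻¹ • (1 + s)) := by
  simp only [IsIdempotentElem, smul_mul_smul, add_mul, mul_add, hs, one_mul, mul_one]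
  module

lemma Matrix.IsHermitian.eq_algebraMap_of_spectrum_eq_singleton {𝕜 n : Type*} [RCLike 𝕜]
    [Fintype n] [DecidableEq n] {A : Matrix n n 𝕜} (hA : A.IsHermitian) {c : ℝ}
    (hc : spectrum ℝ A = {c}) : A = algebraMap ℝ (Matrix n n 𝕜) c := by
  have hB : (A - algebraMap ℝ (Matrix n n 𝕜) c).IsHermitian :=
    hA.sub (IsSelfAdjoint.algebraMap _ (.all c))
  have hspec : spectrum ℝ (A - algebraMap ℝ (Matrix n n 𝕜) c) = {0} := by
    rw [← spectrum.sub_singleton_eq, hc, Set.singleton_sub_singleton, sub_self]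
  have heig : hB.eigenvalues = 0 := funext fun i => by
    simpa [hspec] using hB.eigenvalues_mem_spectrum_real i
  exact sub_eq_zero.mp (hB.eigenvalues_eq_zero_iff.mp heig)

lemma two_le_ncard_spectrum_of_adj {V : Type*} [Fintype V] [DecidableEq V] {G : SimpleGraph V}
    {M : Matrix V V ℝ} (hM : M.IsSymm) (hG : matchesGraph G M) {u v : V} (huv : G.Adj u v) :
    2 ≤ (spectrum ℝ M).ncard := by
  have hH : M.IsHermitian := isHermitian_iff_isSymm.mpr hM
  have hfin : (spectrum ℝ M).Finite := by
    rw [hH.spectrum_real_eq_range_eigenvalues]; exact Set.finite_range _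
  have hne : (spectrum ℝ M).Nonempty :=
    ⟨_, hH.eigenvalues_mem_spectrum_real u⟩
  by_contra! hlt
  obtain ⟨c, hc⟩ : ∃ c, spectrum ℝ M = {c} :=
    Set.ncard_eq_one.mp (by have := (Set.ncard_pos hfin).mpr hne; omega)
  have huv_zero : M u v = 0 := by
    rw [hH.eq_algebraMap_of_spectrum_eq_singleton hc, algebraMap_eq_diagonal]
    exact diagonal_apply_ne _ huv.ne
  exact (hG u v huv.ne).mp huv_zero huv

lemma minDistinctEigs_eq_two {V : Type*} [Fintype V] [DecidableEq V] {G : SimpleGraph V}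
    {u v : V} (huv : G.Adj u v) {M : Matrix V V ℝ} (hM : M.IsSymm) (hG : matchesGraph G M)
    (h2 : (spectrum ℝ M).ncard = 2) : minDistinctEigs G = 2 :=
  le_antisymm (Nat.sInf_le ⟨M, hM, hG, h2⟩)
    (le_csInf ⟨2, M, hM, hG, h2⟩ fun _ ⟨_, hN, hNG, hN2⟩ =>
      hN2 ▸ two_le_ncard_spectrum_of_adj hN hNG huv)

def bitCharacter {n : ℕ} (s : Finset (Fin n)) (u : Fin n → Bool) : ℤ := (-1) ^ #{i ∈ s | u i}

/- Jordan–Wigner signs: flipping bit `j` with sign `bitCharacter (Iio j)` and flipping all bits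
with sign `bitCharacter {0, 2}` give five symmetric, pairwise anticommuting signed permutation
matrices, so their sum squares to `5 • 1`. -/
def clebschSign (u v : Fin 4 → Bool) : ℤ :=
  if v = (fun i => !u i) then bitCharacter {0, 2} u
  else ∑ j, if v = Function.update u j (!u j) then bitCharacter (Iio j) u else 0

instance : DecidableRel clebsch.Adj :=
  inferInstanceAs (DecidableRel (SimpleGraph.fromRel _).Adj)

lemma clebschSign_comm : ∀ u v, clebschSign u v = clebschSign v u := by decide

lemma clebschSign_mul_self : ∀ u v : Fin 4 → Bool,
    ∑ w, clebschSign u w * clebschSign w v = if u = v then 5 else 0 := by decide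

lemma clebschSign_eq_zero_iff : ∀ u v, clebschSign u v = 0 ↔ ¬ clebsch.Adj u v := by decide

lemma abs_clebschSign_of_adj : ∀ u v, clebsch.Adj u v → |clebschSign u v| = 1 := by decide

lemma clebsch_adj_default_update :
    clebsch.Adj default (Function.update default 0 true) := by decide

noncomputable def clebschSignMatrix : Matrix (Fin 4 → Bool) (Fin 4 → Bool) ℝ :=
  of fun u v => clebschSign u v

lemma clebschSignMatrix_mul_self : clebschSignMatrix * clebschSignMatrix = (5 : ℝ) • 1 := by
  ext u v
  simp only [clebschSignMatrix, mul_apply, of_apply, Matrix.smul_apply, one_apply,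
    ← Int.cast_mul, ← Int.cast_sum, clebschSign_mul_self]
  split_ifs <;> simp

noncomputable def clebschProjection : Matrix (Fin 4 → Bool) (Fin 4 → Bool) ℝ :=
  (2 : ℝ)⁻¹ • (1 + (√5)⁻¹ • clebschSignMatrix)

lemma clebschProjection_apply (u v : Fin 4 → Bool) :
    clebschProjection u v = 2⁻¹ * ((1 : Matrix _ _ ℝ) u v + (√5)⁻¹ * clebschSign u v) := by
  simp [clebschProjection, clebschSignMatrix]

lemma clebschProjection_isSymm : clebschProjection.IsSymm :=
  IsSymm.ext fun u v => by
    simp only [clebschProjection_apply, clebschSign_comm u v, one_apply, eq_comm]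

lemma clebschProjection_diag (v : Fin 4 → Bool) : clebschProjection v v = 1 / 2 := by
  simp [clebschProjection_apply, (clebschSign_eq_zero_iff v v).mpr clebsch.irrefl]

lemma matchesGraph_clebschProjection : matchesGraph clebsch clebschProjection := by
  intro u v huv
  simp [clebschProjection_apply, one_apply_ne huv, clebschSign_eq_zero_iff]

lemma abs_clebschProjection_of_adj {u v : Fin 4 → Bool} (huv : clebsch.Adj u v) :
    |clebschProjection u v| = 1 / (2 * √5) := by
  have hs : |(clebschSign u v : ℝ)| = 1 := by exact_mod_cast abs_clebschSign_of_adj u v huv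
  rw [clebschProjection_apply, one_apply_ne huv.ne, zero_add, abs_mul, abs_mul, hs, mul_one,
    abs_of_pos (by positivity), abs_of_pos (by positivity), one_div, mul_inv]

lemma isIdempotentElem_clebschProjection : IsIdempotentElem clebschProjection := by
  refine IsIdempotentElem.half_smul_one_add ?_
  rw [smul_mul_smul, clebschSignMatrix_mul_self, smul_smul, ← sq, inv_pow,
    Real.sq_sqrt (by norm_num), inv_mul_cancel₀ (by norm_num), one_smul]

lemma spectrum_clebschProjection : spectrum ℝ clebschProjection = {0, 1} := by
  refine isIdempotentElem_clebschProjection.spectrum_eq_zero_one ?_ ?_ <;>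
  · intro h
    have := clebschProjection_diag default
    simp [h] at this

theorem clebsch_q_eq_two :
    minDistinctEigs clebsch = 2 ∧
    ∃ M : Matrix (Fin 4 → Bool) (Fin 4 → Bool) ℝ,
      M.IsSymm ∧ matchesGraph clebsch M ∧ M * M = M ∧
      (∀ v, M v v = 1 / 2) ∧
      (∀ u v, clebsch.Adj u v → |M u v| = 1 / (2 * Real.sqrt 5)) ∧
      (spectrum ℝ M).ncard = 2 := by
  have hcard : (spectrum ℝ clebschProjection).ncard = 2 := by
    rw [spectrum_clebschProjection, Set.ncard_pair zero_ne_one]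
  exact ⟨minDistinctEigs_eq_two clebsch_adj_default_update clebschProjection_isSymm
      matchesGraph_clebschProjection hcard,
    clebschProjection, clebschProjection_isSymm, matchesGraph_clebschProjection,
    isIdempotentElem_clebschProjection, clebschProjection_diag,
    fun _ _ => abs_clebschProjection_of_adj, hcard⟩
end

section
/- The plus graph of the Clebsch graph has exactly five connected components, each isomorphic to K_{4,4}. -/
/-- `e` and `f` are a pair of opposite (non-incident) edges of some 4-cycle of `G`. -/
def oppositeInFourCycle {V : Type*} (G : SimpleGraph V) (e f : Sym2 V) : Prop :=
  ∃ a b c d : V, a ≠ b ∧ a ≠ c ∧ a ≠ d ∧ b ≠ c ∧ b ≠ d ∧ c ≠ d ∧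
    G.Adj a b ∧ G.Adj b c ∧ G.Adj c d ∧ G.Adj d a ∧ e = s(a, b) ∧ f = s(c, d)

/-- The plus graph `G⁺`, on the edge set of `G`. -/
def plusGraph {V : Type*} (G : SimpleGraph V) : SimpleGraph G.edgeSet :=
  SimpleGraph.fromRel (fun e f => oppositeInFourCycle G e.1 f.1)

/- ### Auxiliary definitions -/

abbrev V4 := Fin 4 → Bool

def zf : V4 := fun _ => false

def xf (u v : V4) : V4 := fun i => xor (u i) (v i)

def parB (u : V4) : Bool := xor (u 0) (xor (u 1) (xor (u 2) (u 3)))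

def pB (d u : V4) : Bool := xor (parB u) (if parB d then parB (fun i => u i && d i) else false)

def diffE : Sym2 V4 → V4 := Sym2.lift ⟨fun u v => xf u v, by
  intro u v; funext i; simp [xf, Bool.xor_comm]⟩

def pE (d : V4) : Sym2 V4 → Bool := Sym2.lift ⟨fun u v => pB d u && pB d v, by
  intro u v; simp [Bool.and_comm]⟩

def SP (d : V4) : Prop :=
  (Finset.univ.filter fun i => d i ≠ false).card = 1 ∨
  (Finset.univ.filter fun i => d i ≠ false).card = 4

instance (d : V4) : Decidable (SP d) := by unfold SP; infer_instance

def bv (t : Fin 5) : V4 := fun i => decide ((t : ℕ) = 4 ∨ (i : ℕ) = (t : ℕ))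

def typEnc (d : V4) : Fin 5 :=
  if d = bv 0 then 0 else if d = bv 1 then 1 else if d = bv 2 then 2
  else if d = bv 3 then 3 else 4

instance inst_s14 : DecidableRel clebsch.Adj := fun u v =>
  decidable_of_iff _ (SimpleGraph.fromRel_adj _ u v).symm

/- ### xor algebra -/

lemma xf_comm3 (u a b : V4) : xf (xf u a) b = xf (xf u b) a := by
  funext i; simp only [xf]
  cases u i <;> cases a i <;> cases b i <;> rfl

lemma xf_cancel (u a : V4) : xf (xf u a) a = u := by
  funext i; simp only [xf]; cases u i <;> cases a i <;> rfl

lemma xf_diff (u v : V4) : xf u (xf u v) = v := by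
  funext i; simp only [xf]; cases u i <;> cases v i <;> rfl

lemma xf_zero (d : V4) : xf zf d = d := by
  funext i; simp only [xf, zf]; cases d i <;> rfl

/- ### Decidable core facts -/

set_option maxHeartbeats 1000000 in
lemma Ldiff : ∀ u v : V4, clebsch.Adj u v → SP (xf u v) ∧ xf u v ≠ zf := by decide

set_option maxHeartbeats 1000000 in
lemma Linv : ∀ u v : V4, clebsch.Adj u v → pB (xf u v) u = pB (xf u v) v := by decide

set_option synthInstance.maxSize 400 in
set_option maxHeartbeats 4000000 in
lemma Lfwd : ∀ a b c d : V4, clebsch.Adj a b → clebsch.Adj b c → clebsch.Adj c d →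
    clebsch.Adj d a → a ≠ c → b ≠ d →
    (xf a b = xf c d ∧ pB (xf a b) a ≠ pB (xf a b) c) := by decide

set_option maxHeartbeats 1000000 in
lemma Ladj : ∀ u dd : V4, SP dd → clebsch.Adj u (xf u dd) := by decide

set_option maxHeartbeats 1000000 in
lemma Lwit : ∀ u w dd : V4, SP dd → pB dd u ≠ pB dd w →
    ∃ cc : V4, SP cc ∧ cc ≠ zf ∧ cc ≠ dd ∧
      (w = xf u cc ∨ w = xf (xf u dd) cc) := by decide

set_option maxHeartbeats 1000000 in
lemma Ldist : ∀ u dd cc : V4, dd ≠ zf → cc ≠ zf → cc ≠ dd →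
    (u ≠ xf u dd ∧ u ≠ xf (xf u dd) cc ∧ u ≠ xf u cc ∧
     xf u dd ≠ xf (xf u dd) cc ∧ xf u dd ≠ xf u cc ∧
     xf (xf u dd) cc ≠ xf u cc) := by decide

set_option maxHeartbeats 1000000 in
lemma Lopp : ∀ dd u : V4, SP dd → ∃ w : V4, pB dd w = !(pB dd u) := by decide

set_option maxHeartbeats 1000000 in
lemma Lbv : ∀ d : V4, SP d → bv (typEnc d) = d := by decide

set_option maxHeartbeats 1000000 in
set_option maxHeartbeats 1000000 in
lemma LbvS : ∀ t : Fin 5, SP (bv t) ∧ typEnc (bv t) = t := by decide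

set_option maxHeartbeats 1000000 in
lemma Lcard : ∀ d : V4, SP d → ∀ b : Bool,
    Fintype.card {f : clebsch.edgeSet // diffE f.1 = d ∧ pE d f.1 = b} = 4 := by decide

/- ### Adjacency characterization of the plus graph -/

lemma pE_edge {u v : V4} (h : clebsch.Adj u v) (d : V4) (hd : d = xf u v) :
    pE d s(u, v) = pB d u := by
  subst hd
  show (pB (xf u v) u && pB (xf u v) v) = pB (xf u v) u
  rw [← Linv u v h, Bool.and_self]

lemma adj_char (e f : clebsch.edgeSet) :
    (plusGraph clebsch).Adj e f ↔
      (diffE e.1 = diffE f.1 ∧ pE (diffE e.1) e.1 ≠ pE (diffE e.1) f.1) := by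
  constructor
  · intro h
    rw [plusGraph, SimpleGraph.fromRel_adj] at h
    obtain ⟨hne, h | h⟩ := h
    · obtain ⟨a, b, c, d, hab, hac, had, hbc, hbd, hcd, h1, h2, h3, h4, he, hf⟩ := h
      obtain ⟨hdd, hp⟩ := Lfwd a b c d h1 h2 h3 h4 hac hbd
      have hde : diffE e.1 = xf a b := by rw [he]; rfl
      have hdf : diffE f.1 = xf c d := by rw [hf]; rfl
      refine ⟨by rw [hde, hdf, hdd], ?_⟩
      have h5 : pE (diffE e.1) e.1 = pB (xf a b) a := by
        rw [hde, he]; exact pE_edge h1 _ rfl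
      have h6 : pE (diffE e.1) f.1 = pB (xf a b) c := by
        rw [hde, hf, hdd]; exact pE_edge h3 _ rfl
      rw [h5, h6]; exact hp
    · obtain ⟨a, b, c, d, hab, hac, had, hbc, hbd, hcd, h1, h2, h3, h4, hf, he⟩ := h
      obtain ⟨hdd, hp⟩ := Lfwd a b c d h1 h2 h3 h4 hac hbd
      have hde : diffE e.1 = xf c d := by rw [he]; rfl
      have hdf : diffE f.1 = xf a b := by rw [hf]; rfl
      refine ⟨by rw [hde, hdf, hdd], ?_⟩
      have h5 : pE (diffE e.1) e.1 = pB (xf a b) c := by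
        rw [hde, he, hdd]; exact pE_edge h3 _ rfl
      have h6 : pE (diffE e.1) f.1 = pB (xf a b) a := by
        rw [hde, hf, hdd]; exact pE_edge h1 (xf c d) hdd.symm
      rw [h5, h6]; exact fun hh => hp hh.symm
  · intro hh
    obtain ⟨hdiag, hp⟩ := hh
    rw [plusGraph, SimpleGraph.fromRel_adj]
    refine ⟨fun hef => by rw [hef] at hp; exact hp rfl, Or.inl ?_⟩
    obtain ⟨es, hes⟩ := e
    obtain ⟨fs, hfs⟩ := f
    simp only at hdiag hp ⊢
    induction es using Sym2.ind with | _ u v =>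
    induction fs using Sym2.ind with | _ w x =>
    have huv : clebsch.Adj u v := (SimpleGraph.mem_edgeSet clebsch).1 hes
    have hwx : clebsch.Adj w x := (SimpleGraph.mem_edgeSet clebsch).1 hfs
    set dd := xf u v with hdd
    obtain ⟨hS, hnz⟩ := Ldiff u v huv
    have hdE : diffE s(u, v) = dd := rfl
    have hdF : diffE s(w, x) = xf w x := rfl
    have hwxd : xf w x = dd := by rw [← hdF, ← hdiag, hdE]
    have hv : v = xf u dd := by rw [hdd, xf_diff]
    have hx : x = xf w dd := by rw [← hwxd, xf_diff]
    have hpu : pE dd s(u, v) = pB dd u := pE_edge huv _ hdd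
    have hpw : pE dd s(w, x) = pB dd w := pE_edge hwx _ hwxd.symm
    rw [hdE, hpu, hpw] at hp
    obtain ⟨cc, hSc, hcz, hcd, hcase⟩ := Lwit u w dd hS hp
    obtain ⟨d1, d2, d3, d4, d5, d6⟩ := Ldist u dd cc hnz hcz hcd
    have adj1 : clebsch.Adj u (xf u dd) := Ladj u dd hS
    have adj2 : clebsch.Adj (xf u dd) (xf (xf u dd) cc) := Ladj _ cc hSc
    have adj4 : clebsch.Adj (xf u cc) u := (Ladj u cc hSc).symm
    have adj3 : clebsch.Adj (xf (xf u dd) cc) (xf u cc) := by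
      have h' := Ladj (xf u cc) dd hS
      rw [xf_comm3] at h'
      exact h'.symm
    refine ⟨u, xf u dd, xf (xf u dd) cc, xf u cc, d1, d2, d3, d4, d5, d6,
      adj1, adj2, adj3, adj4, by rw [hv], ?_⟩
    rcases hcase with hc | hc
    · have hx' : x = xf (xf u dd) cc := by rw [hx, hc, xf_comm3]
      rw [hc, hx', Sym2.eq_swap]
    · have hx' : x = xf u cc := by rw [hx, hc, xf_comm3 _ cc dd, xf_cancel]
      rw [hc, hx']

/- ### Components -/

def tmap (e : clebsch.edgeSet) : Fin 5 := typEnc (diffE e.1)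

lemma edge_SP (e : clebsch.edgeSet) : SP (diffE e.1) := by
  obtain ⟨es, hes⟩ := e
  induction es using Sym2.ind with | _ u v =>
  exact (Ldiff u v ((SimpleGraph.mem_edgeSet clebsch).1 hes)).1

lemma reach_diff {e f : clebsch.edgeSet} (h : (plusGraph clebsch).Reachable e f) :
    diffE e.1 = diffE f.1 := by
  obtain ⟨p⟩ := h
  induction p with
  | nil => rfl
  | cons h p ih => exact ((adj_char _ _).1 h).1.trans ih

lemma samediff_reach {e f : clebsch.edgeSet} (h : diffE e.1 = diffE f.1) :
    (plusGraph clebsch).Reachable e f := by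
  by_cases hp : pE (diffE e.1) e.1 = pE (diffE e.1) f.1
  · -- go through an edge of opposite parity
    obtain ⟨es, hes⟩ := e
    induction es using Sym2.ind with | _ u v =>
    have huv : clebsch.Adj u v := (SimpleGraph.mem_edgeSet clebsch).1 hes
    set dd := xf u v with hdd
    obtain ⟨hS, hnz⟩ := Ldiff u v huv
    obtain ⟨w, hw⟩ := Lopp dd u hS
    have hgadj : clebsch.Adj w (xf w dd) := Ladj w dd hS
    set g : clebsch.edgeSet := ⟨s(w, xf w dd), (SimpleGraph.mem_edgeSet clebsch).2 hgadj⟩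
      with hg
    have hdg : diffE g.1 = dd := by
      show xf w (xf w dd) = dd
      rw [xf_diff]
    have hde : diffE (⟨s(u,v), hes⟩ : clebsch.edgeSet).1 = dd := rfl
    have hpe : pE dd s(u, v) = pB dd u := pE_edge huv _ hdd
    have hpg : pE dd g.1 = pB dd w := pE_edge hgadj _ (by rw [xf_diff])
    have hdf : diffE f.1 = dd := by rw [← h]; exact hde
    have adj1 : (plusGraph clebsch).Adj ⟨s(u,v), hes⟩ g := by
      rw [adj_char]
      refine ⟨by rw [hde, hdg], ?_⟩
      rw [hde]
      show pE dd s(u,v) ≠ pE dd g.1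
      rw [hpe, hpg, hw]
      cases pB dd u <;> simp
    have adj2 : (plusGraph clebsch).Adj g f := by
      rw [adj_char]
      refine ⟨by rw [hdg, hdf], ?_⟩
      rw [hdg]
      have hfu : pE dd f.1 = pB dd u := by
        rw [hde] at hp
        rw [← hp]
        exact hpe
      rw [hfu, hpg, hw]
      cases pB dd u <;> simp
    exact adj1.reachable.trans adj2.reachable
  · exact ((adj_char e f).2 ⟨h, hp⟩).reachable

lemma tmap_walk : ∀ (v w : clebsch.edgeSet) (p : (plusGraph clebsch).Walk v w),
    p.IsPath → tmap v = tmap w := by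
  intro v w p _
  exact congrArg typEnc (reach_diff p.reachable)

def phi : (plusGraph clebsch).ConnectedComponent → Fin 5 :=
  SimpleGraph.ConnectedComponent.lift tmap tmap_walk

def baseEdge (t : Fin 5) : clebsch.edgeSet :=
  ⟨s(zf, bv t), (SimpleGraph.mem_edgeSet clebsch).2
    (by rw [← xf_zero (bv t)]; exact Ladj zf (bv t) (LbvS t).1)⟩

def psi (t : Fin 5) : (plusGraph clebsch).ConnectedComponent :=
  (plusGraph clebsch).connectedComponentMk (baseEdge t)

lemma diff_baseEdge (t : Fin 5) : diffE (baseEdge t).1 = bv t := by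
  show xf zf (bv t) = bv t
  exact xf_zero _

def ccEquiv : (plusGraph clebsch).ConnectedComponent ≃ Fin 5 where
  toFun := phi
  invFun := psi
  left_inv := by
    intro c
    induction c using SimpleGraph.ConnectedComponent.ind with | _ e =>
    have hphi : phi ((plusGraph clebsch).connectedComponentMk e) = tmap e :=
      SimpleGraph.ConnectedComponent.lift_mk
    rw [hphi]
    apply SimpleGraph.ConnectedComponent.eq.2
    apply samediff_reach
    rw [diff_baseEdge]
    exact Lbv _ (edge_SP e)
  right_inv := by
    intro t
    have hphi : phi (psi t) = tmap (baseEdge t) := SimpleGraph.ConnectedComponent.lift_mk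
    rw [hphi]
    show typEnc (diffE (baseEdge t).1) = t
    rw [diff_baseEdge]
    exact (LbvS t).2

/- ### K_{4,4} isomorphism helper -/

lemma equiv_fin_of_card {X : Type} [Finite X] {n : ℕ} (h : Nat.card X = n) :
    Nonempty (X ≃ Fin n) := by
  obtain ⟨m, ⟨eq⟩⟩ := Finite.exists_equiv_fin X
  have hm : m = n := by
    rw [← h, Nat.card_congr eq, Nat.card_eq_fintype_card, Fintype.card_fin]
  exact ⟨hm ▸ eq⟩

lemma iso_k44 {X : Type} [Finite X] (G : SimpleGraph X) (q : X → Bool)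
    (h : ∀ x y, G.Adj x y ↔ q x ≠ q y)
    (ht : Nat.card {x // q x = true} = 4) (hf : Nat.card {x // q x = false} = 4) :
    Nonempty (G ≃g completeBipartiteGraph (Fin 4) (Fin 4)) := by
  obtain ⟨et⟩ := equiv_fin_of_card ht
  obtain ⟨ef⟩ := equiv_fin_of_card hf
  let F : Fin 4 ⊕ Fin 4 ≃ X :=
    { toFun := Sum.elim (fun i => (et.symm i).1) (fun j => (ef.symm j).1)
      invFun := fun x => if hx : q x = true then Sum.inl (et ⟨x, hx⟩)
        else Sum.inr (ef ⟨x, by revert hx; cases q x <;> simp⟩)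
      left_inv := by
        rintro (i | j)
        · simp only [Sum.elim_inl, dif_pos (et.symm i).2, Subtype.coe_eta,
            Equiv.apply_symm_apply]
        · have hj : q (ef.symm j).1 = false := (ef.symm j).2
          simp only [Sum.elim_inr,
            dif_neg (show ¬ q (ef.symm j).1 = true by rw [hj]; simp),
            Subtype.coe_eta, Equiv.apply_symm_apply]
      right_inv := by
        intro x
        by_cases hx : q x = true
        · simp only [dif_pos hx, Sum.elim_inl, Equiv.symm_apply_apply]
        · simp only [dif_neg hx, Sum.elim_inr, Equiv.symm_apply_apply] }
  have hql : ∀ i : Fin 4, q (F (Sum.inl i)) = true := fun i => (et.symm i).2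
  have hqr : ∀ j : Fin 4, q (F (Sum.inr j)) = false := fun j => (ef.symm j).2
  refine ⟨(⟨F, ?_⟩ :
    completeBipartiteGraph (Fin 4) (Fin 4) ≃g G).symm⟩
  rintro (i | j) (i' | j') <;>
    simp only [h, hql, hqr, completeBipartiteGraph, SimpleGraph.fromRel_adj] <;> simp

/- ### Main theorem -/

theorem clebsch_plusGraph_components :
    Nat.card (plusGraph clebsch).ConnectedComponent = 5 ∧
    ∀ c : (plusGraph clebsch).ConnectedComponent,
      Nonempty ((SimpleGraph.induce c.supp (plusGraph clebsch)) ≃g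
        completeBipartiteGraph (Fin 4) (Fin 4)) := by
  constructor
  · rw [Nat.card_congr ccEquiv, Nat.card_eq_fintype_card, Fintype.card_fin]
  · intro c
    induction c using SimpleGraph.ConnectedComponent.ind with | _ e =>
    have supp_eq : ((plusGraph clebsch).connectedComponentMk e).supp
        = {f : clebsch.edgeSet | diffE f.1 = diffE e.1} := by
      ext f
      rw [SimpleGraph.ConnectedComponent.mem_supp_iff, SimpleGraph.ConnectedComponent.eq]
      exact ⟨fun h => reach_diff h, fun h => samediff_reach h⟩
    rw [supp_eq]
    set s : Set clebsch.edgeSet := {f : clebsch.edgeSet | diffE f.1 = diffE e.1} with hs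
    apply iso_k44 (q := fun x : s => pE (diffE e.1) x.1.1)
    · intro x y
      have hadj : (SimpleGraph.induce s (plusGraph clebsch)).Adj x y ↔
          (plusGraph clebsch).Adj x.1 y.1 := by simp
      rw [hadj, adj_char]
      have hx : diffE x.1.1 = diffE e.1 := x.2
      have hy : diffE y.1.1 = diffE e.1 := y.2
      rw [hx, hy]
      simp
    · have E : {x : s // pE (diffE e.1) x.1.1 = true} ≃
          {f : clebsch.edgeSet // diffE f.1 = diffE e.1 ∧ pE (diffE e.1) f.1 = true} :=
        ⟨fun z => ⟨z.1.1, ⟨z.1.2, z.2⟩⟩, fun z => ⟨⟨z.1, z.2.1⟩, z.2.2⟩,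
          fun z => rfl, fun z => rfl⟩
      rw [Nat.card_congr E, Nat.card_eq_fintype_card]
      exact Lcard _ (edge_SP e) true
    · have E : {x : s // pE (diffE e.1) x.1.1 = false} ≃
          {f : clebsch.edgeSet // diffE f.1 = diffE e.1 ∧ pE (diffE e.1) f.1 = false} :=
        ⟨fun z => ⟨z.1.1, ⟨z.1.2, z.2⟩⟩, fun z => ⟨⟨z.1, z.2.1⟩, z.2.2⟩,
          fun z => rfl, fun z => rfl⟩
      rw [Nat.card_congr E, Nat.card_eq_fintype_card]
      exact Lcard _ (edge_SP e) false
end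

section
/- Let G be SRG(n, k, 0, 2), M ∈ S(G) with M² = M, and s(e) = sgn(M_{ij}) for each edge e. Let C₈ be an 8-cycle in G and v a vertex with exactly 4 neighbors on C₈. Then C₈ is even: the product of the signs of its eight edges equals 1. -/
lemma aux_four_cycle {V : Type*} [Fintype V] [DecidableEq V]
    (G : SimpleGraph V) [DecidableRel G.Adj] (n k : ℕ)
    (hsrg : G.IsSRGWith n k 0 2)
    (M : Matrix V V ℝ) (hM : matchesGraph G M) (hsymm : M.IsSymm)
    (hidem : M * M = M) (x y a b : V) (hxy : x ≠ y) (hnadj : ¬ G.Adj x y)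
    (hxa : G.Adj x a) (hay : G.Adj a y) (hxb : G.Adj x b) (hby : G.Adj b y)
    (hab : a ≠ b) :
    M x a * M a y * M y b * M b x < 0 := by
  classical
  have hcard := hsrg.of_not_adj hxy hnadj
  set T := (G.commonNeighbors x y).toFinset with hTdef
  have hT : T.card = 2 := by rw [hTdef, Set.toFinset_card]; exact hcard
  have haT : a ∈ T := by
    rw [hTdef, Set.mem_toFinset, SimpleGraph.mem_commonNeighbors]
    exact ⟨hxa, hay.symm⟩
  have hbT : b ∈ T := by
    rw [hTdef, Set.mem_toFinset, SimpleGraph.mem_commonNeighbors]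
    exact ⟨hxb, hby.symm⟩
  have hTeq : T = {a, b} := by
    refine (Finset.eq_of_subset_of_card_le ?_ ?_).symm
    · intro z hz
      rcases Finset.mem_insert.mp hz with h | h
      · exact h ▸ haT
      · exact (Finset.mem_singleton.mp h) ▸ hbT
    · rw [hT, Finset.card_insert_of_notMem (by simp [hab]), Finset.card_singleton]
  have hMxy : M x y = 0 := (hM x y hxy).mpr hnadj
  have hsum : ∑ l, M x l * M l y = 0 := by
    rw [← Matrix.mul_apply, hidem, hMxy]
  have hsum2 : ∑ l ∈ T, M x l * M l y = ∑ l, M x l * M l y := by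
    refine Finset.sum_subset (Finset.subset_univ T) ?_
    intro l _ hl
    rw [hTdef, Set.mem_toFinset, SimpleGraph.mem_commonNeighbors] at hl
    by_cases hlx : l = x
    · subst hlx; rw [hMxy, mul_zero]
    by_cases hly : l = y
    · subst hly; rw [hMxy, zero_mul]
    by_cases hadj : G.Adj x l
    · have h2 : ¬ G.Adj l y := fun h => hl ⟨hadj, h.symm⟩
      rw [(hM l y hly).mpr h2, mul_zero]
    · rw [(hM x l (Ne.symm hlx)).mpr hadj, zero_mul]
  have hkey : M x a * M a y + M x b * M b y = 0 := by
    have := hsum2.trans hsum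
    rwa [hTeq, Finset.sum_pair hab] at this
  have hxbne : M x b ≠ 0 := fun h => ((hM x b (G.ne_of_adj hxb)).mp h) hxb
  have hbyne : M b y ≠ 0 := fun h => ((hM b y (G.ne_of_adj hby)).mp h) hby
  have h1 : M y b = M b y := hsymm.apply b y
  have h2 : M b x = M x b := hsymm.apply x b
  have hq : M x b * M b y ≠ 0 := mul_ne_zero hxbne hbyne
  have hq2 : 0 < (M x b * M b y) ^ 2 :=
    lt_of_le_of_ne (sq_nonneg _) (Ne.symm (pow_ne_zero 2 hq))
  rw [h1, h2]
  have h3 : M x a * M a y = -(M x b * M b y) := by linarith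
  have h4 : M x a * M a y * M b y * M x b = -((M x b * M b y) ^ 2) := by
    rw [h3]; ring
  rw [h4]; linarith
theorem eight_cycle_even_of_four_neighbors {V : Type*} [Fintype V] [DecidableEq V]
    (G : SimpleGraph V) [DecidableRel G.Adj] (n k : ℕ)
    (hsrg : G.IsSRGWith n k 0 2)
    (M : Matrix V V ℝ) (hM : matchesGraph G M) (hsymm : M.IsSymm)
    (hidem : M * M = M)
    (v : Fin 8 → V) (hv : Function.Injective v)
    (hcyc : ∀ i : Fin 8, G.Adj (v i) (v (i + 1)))
    (u : V) (hu : u ∉ Set.range v)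
    (hnbrs : ({i : Fin 8 | G.Adj u (v i)} : Set (Fin 8)).ncard = 4) :
    0 < ∏ i : Fin 8, M (v i) (v (i + 1)) := by
  classical
  -- triangle-freeness
  have tri : ∀ x y z : V, G.Adj x y → G.Adj x z → G.Adj y z → False := by
    intro x y z hxy hxz hyz
    have h0 := hsrg.of_adj x y hxy
    rw [Fintype.card_eq_zero_iff] at h0
    exact h0.false ⟨z, hxz, hyz⟩
  -- the neighbor finset
  set T : Finset (Fin 8) := Finset.univ.filter (fun i => G.Adj u (v i)) with hTdef
  have memT : ∀ i : Fin 8, G.Adj u (v i) ↔ i ∈ T := by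
    intro i; simp [hTdef]
  have hTcard : T.card = 4 := by
    have := hnbrs
    rw [Set.ncard_eq_toFinset_card', Set.toFinset_setOf] at this
    exact this
  have hnocons : ∀ i : Fin 8, i ∈ T → i + 1 ∉ T := by
    intro i hi hi1
    exact tri u (v i) (v (i+1)) ((memT i).mpr hi) ((memT (i+1)).mpr hi1) (hcyc i)
  have halt' : ∀ S : Finset (Fin 8), S.card = 4 → (∀ i ∈ S, i+1 ∉ S) →
      S = ({0,2,4,6} : Finset (Fin 8)) ∨ S = ({1,3,5,7} : Finset (Fin 8)) := by
    set_option maxRecDepth 100000 in decide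
  have halt := halt' T hTcard hnocons
  -- the crossbar 4-cycle inequality
  have key : ∀ j : Fin 8, G.Adj u (v j) → ¬ G.Adj u (v (j+1)) → G.Adj u (v (j+2)) →
      M u (v j) * M (v j) (v (j+1)) * M (v (j+1)) (v (j+2)) * M (v (j+2)) u < 0 := by
    intro j h1 h2 h3
    have e : j + 1 + 1 = j + 2 := by rw [add_assoc]; rfl
    have hby : G.Adj (v (j+2)) (v (j+1)) := by
      have h := hcyc (j+1); rw [e] at h; exact h.symm
    have hab : v j ≠ v (j+2) :=
      fun h => (by decide : ∀ j : Fin 8, j ≠ j + 2) j (hv h)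
    exact aux_four_cycle G n k hsrg M hM hsymm hidem u (v (j+1)) (v j) (v (j+2))
      (fun h => hu ⟨j+1, h.symm⟩) h2 h1 (hcyc j) h3 hby hab
  -- generic index facts
  have memself : ∀ t : Fin 8, t ∈ ({t, t+2, t+4, t+6} : Finset (Fin 8)) := by decide
  have mem2 : ∀ t : Fin 8, t+2 ∈ ({t, t+2, t+4, t+6} : Finset (Fin 8)) := by decide
  have mem4 : ∀ t : Fin 8, t+4 ∈ ({t, t+2, t+4, t+6} : Finset (Fin 8)) := by decide
  have mem6 : ∀ t : Fin 8, t+6 ∈ ({t, t+2, t+4, t+6} : Finset (Fin 8)) := by decide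
  have nmem1 : ∀ t : Fin 8, t+1 ∉ ({t, t+2, t+4, t+6} : Finset (Fin 8)) := by decide
  have nmem3 : ∀ t : Fin 8, t+3 ∉ ({t, t+2, t+4, t+6} : Finset (Fin 8)) := by decide
  have nmem5 : ∀ t : Fin 8, t+5 ∉ ({t, t+2, t+4, t+6} : Finset (Fin 8)) := by decide
  have nmem7 : ∀ t : Fin 8, t+7 ∉ ({t, t+2, t+4, t+6} : Finset (Fin 8)) := by decide
  have i11 : ∀ t : Fin 8, t+1+1 = t+2 := by decide
  have i21 : ∀ t : Fin 8, t+2+1 = t+3 := by decide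
  have i31 : ∀ t : Fin 8, t+3+1 = t+4 := by decide
  have i41 : ∀ t : Fin 8, t+4+1 = t+5 := by decide
  have i51 : ∀ t : Fin 8, t+5+1 = t+6 := by decide
  have i61 : ∀ t : Fin 8, t+6+1 = t+7 := by decide
  have i71 : ∀ t : Fin 8, t+7+1 = t := by decide
  have i22 : ∀ t : Fin 8, t+2+2 = t+4 := by decide
  have i42 : ∀ t : Fin 8, t+4+2 = t+6 := by decide
  have i62 : ∀ t : Fin 8, t+6+2 = t := by decide
  -- the main generic argument for an alternating pattern starting at t
  have main : ∀ t : Fin 8,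
      (∀ i : Fin 8, G.Adj u (v i) ↔ i ∈ ({t, t+2, t+4, t+6} : Finset (Fin 8))) →
      0 < ∏ i : Fin 8, M (v i) (v (i + 1)) := by
    intro t hadj
    have aA : G.Adj u (v t) := (hadj t).mpr (memself t)
    have aB : G.Adj u (v (t+2)) := (hadj (t+2)).mpr (mem2 t)
    have aC : G.Adj u (v (t+4)) := (hadj (t+4)).mpr (mem4 t)
    have aD : G.Adj u (v (t+6)) := (hadj (t+6)).mpr (mem6 t)
    have na1 : ¬ G.Adj u (v (t+1)) := fun h => nmem1 t ((hadj (t+1)).mp h)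
    have na3 : ¬ G.Adj u (v (t+3)) := fun h => nmem3 t ((hadj (t+3)).mp h)
    have na5 : ¬ G.Adj u (v (t+5)) := fun h => nmem5 t ((hadj (t+5)).mp h)
    have na7 : ¬ G.Adj u (v (t+7)) := fun h => nmem7 t ((hadj (t+7)).mp h)
    have c0 := key t aA na1 aB
    have c2 := key (t+2) aB (by rw [i21]; exact na3) (by rw [i22]; exact aC)
    have c4 := key (t+4) aC (by rw [i41]; exact na5) (by rw [i42]; exact aD)
    have c6 := key (t+6) aD (by rw [i61]; exact na7) (by rw [i62]; exact aA)
    -- reindex the product to start at t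
    have hre : ∏ i : Fin 8, M (v (t + i)) (v (t + i + 1)) = ∏ i : Fin 8, M (v i) (v (i + 1)) :=
      Equiv.prod_comp (Equiv.addLeft t) (fun i => M (v i) (v (i + 1)))
    rw [← hre, Fin.prod_univ_eight]
    simp only [add_zero, i11 t, i21 t, i31 t, i41 t, i51 t, i61 t, i71 t, i22 t, i42 t, i62 t]
      at c0 c2 c4 c6 ⊢
    rw [hsymm.apply u (v (t+2))] at c0
    rw [hsymm.apply u (v (t+4))] at c2
    rw [hsymm.apply u (v (t+6))] at c4
    rw [hsymm.apply u (v t)] at c6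
    have hA : M u (v t) ≠ 0 := fun h => ((hM u (v t) (G.ne_of_adj aA)).mp h) aA
    have hB : M u (v (t+2)) ≠ 0 := fun h => ((hM u (v (t+2)) (G.ne_of_adj aB)).mp h) aB
    have hC : M u (v (t+4)) ≠ 0 := fun h => ((hM u (v (t+4)) (G.ne_of_adj aC)).mp h) aC
    have hD : M u (v (t+6)) ≠ 0 := fun h => ((hM u (v (t+6)) (G.ne_of_adj aD)).mp h) aD
    set A := M u (v t) with hA'
    set B := M u (v (t+2)) with hB'
    set C := M u (v (t+4)) with hC'
    set D := M u (v (t+6)) with hD'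
    set g0 := M (v t) (v (t+1)) with hg0
    set g1 := M (v (t+1)) (v (t+2)) with hg1
    set g2 := M (v (t+2)) (v (t+3)) with hg2
    set g3 := M (v (t+3)) (v (t+4)) with hg3
    set g4 := M (v (t+4)) (v (t+5)) with hg4
    set g5 := M (v (t+5)) (v (t+6)) with hg5
    set g6 := M (v (t+6)) (v (t+7)) with hg6
    set g7 := M (v (t+7)) (v t) with hg7
    have h02 := mul_pos_of_neg_of_neg c0 c2
    have h46 := mul_pos_of_neg_of_neg c4 c6
    have hp := mul_pos h02 h46
    have hs : A * B * C * D ≠ 0 := mul_ne_zero (mul_ne_zero (mul_ne_zero hA hB) hC) hD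
    have hs2 : 0 < (A * B * C * D) ^ 2 :=
      lt_of_le_of_ne (sq_nonneg _) (Ne.symm (pow_ne_zero 2 hs))
    have hfact : (g0 * g1 * g2 * g3 * g4 * g5 * g6 * g7) * (A * B * C * D) ^ 2 =
        (A * g0 * g1 * B) * (B * g2 * g3 * C) * ((C * g4 * g5 * D) * (D * g6 * g7 * A)) := by
      ring
    nlinarith [hp, hs2, hfact]
  rcases halt with h | h
  · refine main 0 ?_
    intro i
    rw [memT i, h]
    have : ({0,2,4,6} : Finset (Fin 8)) = {0, 0+2, 0+4, 0+6} := by decide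
    rw [this]
  · refine main 1 ?_
    intro i
    rw [memT i, h]
    have : ({1,3,5,7} : Finset (Fin 8)) = {1, 1+2, 1+4, 1+6} := by decide
    rw [this]
end
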